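/- (Characterization of divides.) For all x₀, c ∈ ℝ, the following are equivalent: (i) 𝒰(x₀ + t·f'(c), t) = {c} for every t > 0, i.e., the line {(x₀ + t·f'(c), t) : t > 0} is a divide of the entropy solution emitting from x₀ with speed c; (ii) Φ(y) ≥ Φ(x₀) + c·(y − x₀) for every y ∈ ℝ. -/

import Mathlib

open MeasureTheory Filter Set

noncomputable def eFun (f φ : ℝ → ℝ) (u x t : ℝ) : ℝ :=
  t * (∫ s in (0:ℝ)..u, deriv (deriv f) s * (φ (x - t * deriv f s) - s))

def maxSet (f φ : ℝ → ℝ) (x t : ℝ) : Set ℝ :=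
  {w : ℝ | ∀ v : ℝ, eFun f φ v x t ≤ eFun f φ w x t}

noncomputable def uPlus (f φ : ℝ → ℝ) (x t : ℝ) : ℝ := sInf (maxSet f φ x t)

noncomputable def uMinus (f φ : ℝ → ℝ) (x t : ℝ) : ℝ := sSup (maxSet f φ x t)

noncomputable def phiInt (φ : ℝ → ℝ) (x : ℝ) : ℝ := ∫ ξ in (0:ℝ)..x, φ ξ

/-!
Write `p = f'` and put `x = x₀ + t p(c)`. Substituting `ξ = x - t p(s)` in the `φ`-part of `E`
and integrating the `s f''(s)`-part by parts gives, with `y = x₀ + t (p(c) - p(u))`,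
`E(u) - E(c) = [Φ(x₀) + c (y - x₀) - Φ(y)] - t ∫_c^u (p(u) - p(s)) ds`.
Since `p` is strictly increasing, the last integral is positive for `u ≠ c`, so (ii) makes `c` the
unique maximiser. Conversely, for large `t` every `y` is reached by some `u` close to `c`, and then
`t ∫_c^u (p(u) - p(s)) ds ≤ |u - c| |y - x₀|` is small, so (i) forces (ii).
-/

open Topology Interval

lemma intervalIntegrable_of_abs_le {g : ℝ → ℝ} {C : ℝ} (hm : Measurable g)
    (hC : ∀ s, |g s| ≤ C) (a b : ℝ) : IntervalIntegrable g volume a b := by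
  rw [intervalIntegrable_iff]
  exact Measure.integrableOn_of_bounded measure_Ioc_lt_top.ne hm.aestronglyMeasurable
    (Eventually.of_forall fun s => by simpa [Real.norm_eq_abs] using hC s)

lemma strictMono_of_deriv_nonneg_of_null {g : ℝ → ℝ} (hg : Differentiable ℝ g)
    (hg' : ∀ x, 0 ≤ deriv g x) (hnull : volume {x | deriv g x = 0} = 0) : StrictMono g := by
  have hmono : Monotone g := monotone_of_deriv_nonneg hg hg'
  intro a b hab
  refine (hmono hab.le).lt_of_ne fun heq => ?_
  have hsub : Ioo a b ⊆ {x | deriv g x = 0} := fun s hs => by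
    have hconst : g =ᶠ[𝓝 s] fun _ => g a :=
      eventuallyEq_of_mem (isOpen_Ioo.mem_nhds hs) fun r hr =>
        le_antisymm (heq ▸ hmono hr.2.le) (hmono hr.1.le)
    simpa using hconst.deriv_eq
  have hvol := measure_mono_null hsub hnull
  rw [Real.volume_Ioo, ENNReal.ofReal_eq_zero] at hvol
  linarith

section Monotone

variable {p : ℝ → ℝ}

lemma exists_mul_sub_eq_of_strictMono (hpc : Continuous p) (hp : StrictMono p) (c z : ℝ)
    {δ : ℝ} (hδ : 0 < δ) : ∃ t > 0, ∃ u, |u - c| ≤ δ ∧ t * (p c - p u) = z := by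
  set m := min (p c - p (c - δ)) (p (c + δ) - p c)
  have hm : 0 < m := lt_min (sub_pos.2 (hp (by linarith))) (sub_pos.2 (hp (by linarith)))
  set t := (|z| + 1) / m
  have ht : 0 < t := by positivity
  have hzt : |z / t| ≤ m := by
    have hmt : m * t = |z| + 1 := mul_div_cancel₀ _ hm.ne'
    rw [abs_div, abs_of_pos ht, div_le_iff₀ ht]
    linarith
  have hmem : p c - z / t ∈ Icc (p (c - δ)) (p (c + δ)) := by
    obtain ⟨hl, hr⟩ := abs_le.1 hzt
    constructor <;> linarith [min_le_left (p c - p (c - δ)) (p (c + δ) - p c),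
      min_le_right (p c - p (c - δ)) (p (c + δ) - p c)]
  obtain ⟨u, hu, hpu⟩ := intermediate_value_Icc (by linarith) hpc.continuousOn hmem
  refine ⟨t, ht, u, abs_le.2 ⟨by linarith [hu.1], by linarith [hu.2]⟩, ?_⟩
  rw [hpu]
  field_simp
  ring

lemma integral_sub_pos_of_strictMono (hpc : Continuous p) (hp : StrictMono p) {c u : ℝ}
    (hne : u ≠ c) : 0 < ∫ s in c..u, (p u - p s) := by
  rcases hne.lt_or_gt with h | h
  · rw [intervalIntegral.integral_symm, ← intervalIntegral.integral_neg]
    exact intervalIntegral.intervalIntegral_pos_of_pos_on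
      ((continuous_const.sub hpc).neg.intervalIntegrable _ _)
      (fun s hs => by simpa using hp hs.1) h
  · exact intervalIntegral.intervalIntegral_pos_of_pos_on
      ((continuous_const.sub hpc).intervalIntegrable _ _) (fun s hs => sub_pos.2 (hp hs.2)) h

lemma integral_sub_le_of_monotone (hp : Monotone p) (c u : ℝ) :
    ∫ s in c..u, (p u - p s) ≤ |u - c| * |p u - p c| := by
  have hbound : ∀ s ∈ Ι c u, ‖p u - p s‖ ≤ |p u - p c| := fun s hs =>
    abs_sub_right_of_mem_uIcc (hp.mapsTo_uIcc (uIoc_subset_uIcc hs))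
  calc ∫ s in c..u, (p u - p s) ≤ ‖∫ s in c..u, (p u - p s)‖ := le_abs_self _
    _ ≤ |p u - p c| * |u - c| := intervalIntegral.norm_integral_le_of_norm_le_const hbound
    _ = |u - c| * |p u - p c| := mul_comm _ _

end Monotone

section Integrals

variable {p q : ℝ → ℝ}

lemma mul_integral_comp_mul_deriv (hpq : ∀ s, HasDerivAt p (q s) s) (hq : ∀ s, 0 ≤ q s)
    (φ : ℝ → ℝ) (x a b : ℝ) {t : ℝ} (ht : 0 ≤ t) :
    t * ∫ s in a..b, φ (x - t * p s) * q s = ∫ ξ in (x - t * p b)..(x - t * p a), φ ξ := by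
  have hsub : ∀ s, HasDerivAt (fun s => x - t * p s) (-(t * q s)) s := fun s => by
    simpa using ((hpq s).const_mul t).const_sub x
  have hcov := intervalIntegral.integral_comp_mul_deriv_of_deriv_nonpos (a := a) (b := b) (g := φ)
    (fun s _ => (hsub s).continuousAt.continuousWithinAt) (fun s _ => hsub s)
    (fun s _ => neg_nonpos.2 (mul_nonneg ht (hq s)))
  simp only [Function.comp_def, mul_neg] at hcov
  rw [intervalIntegral.integral_symm (x - t * p a), ← hcov, intervalIntegral.integral_neg, neg_neg,
    ← intervalIntegral.integral_const_mul]
  congr 1 with s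
  ring

lemma integral_mul_deriv_eq (hpq : ∀ s, HasDerivAt p (q s) s) (hqc : Continuous q) (c u : ℝ) :
    ∫ s in c..u, s * q s = c * (p u - p c) + ∫ s in c..u, (p u - p s) := by
  have hpc : Continuous p := continuous_iff_continuousAt.2 fun s => (hpq s).continuousAt
  have hparts := intervalIntegral.integral_mul_deriv_eq_deriv_mul (a := c) (b := u)
    (fun s _ => hasDerivAt_id s) (fun s _ => hpq s) intervalIntegrable_const
    (hqc.intervalIntegrable c u)
  rw [intervalIntegral.integral_sub intervalIntegrable_const (hpc.intervalIntegrable c u),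
    intervalIntegral.integral_const, smul_eq_mul]
  simp only [id, one_mul] at hparts
  linarith

end Integrals

lemma phiInt_sub_phiInt {φ : ℝ → ℝ} {M : ℝ} (hφmeas : Measurable φ) (hφbdd : ∀ x, |φ x| ≤ M)
    (a b : ℝ) : phiInt φ b - phiInt φ a = ∫ ξ in a..b, φ ξ :=
  intervalIntegral.integral_interval_sub_left (intervalIntegrable_of_abs_le hφmeas hφbdd 0 b)
    (intervalIntegrable_of_abs_le hφmeas hφbdd 0 a)

lemma maxSet_eq_singleton_iff {f φ : ℝ → ℝ} {x t c : ℝ} :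
    maxSet f φ x t = {c} ↔ ∀ v ≠ c, eFun f φ v x t < eFun f φ c x t := by
  constructor
  · intro h v hv
    have hc : c ∈ maxSet f φ x t := h ▸ rfl
    refine (hc v).lt_of_ne fun heq => hv ?_
    rw [← mem_singleton_iff, ← h]
    exact fun w => heq ▸ hc w
  · intro h
    ext w
    refine ⟨fun hw => by_contra fun hne => (hw c).not_gt (h w hne), ?_⟩
    rintro rfl v
    rcases eq_or_ne v w with rfl | hv
    exacts [le_rfl, (h v hv).le]

def IsDivide (f φ : ℝ → ℝ) (x₀ c : ℝ) : Prop :=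
  ∀ t : ℝ, 0 < t → maxSet f φ (x₀ + t * deriv f c) t = {c}

section Divide

variable {f φ : ℝ → ℝ} {M : ℝ}

lemma eFun_sub_eFun (hf : ContDiff ℝ 2 f) (hconv : ∀ u, 0 ≤ deriv (deriv f) u)
    (hφmeas : Measurable φ) (hφbdd : ∀ x, |φ x| ≤ M) (x₀ c u : ℝ) {t : ℝ} (ht : 0 ≤ t) :
    eFun f φ u (x₀ + t * deriv f c) t - eFun f φ c (x₀ + t * deriv f c) t
      = phiInt φ x₀ + c * ((x₀ + t * (deriv f c - deriv f u)) - x₀)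
        - phiInt φ (x₀ + t * (deriv f c - deriv f u))
        - t * ∫ s in c..u, (deriv f u - deriv f s) := by
  have hpq : ∀ s, HasDerivAt (deriv f) (deriv (deriv f) s) s := fun s =>
    (hf.differentiable_deriv_two s).hasDerivAt
  have hqc : Continuous (deriv (deriv f)) := (hf.deriv' (n := 1)).continuous_deriv_one
  have hφq : ∀ a b, IntervalIntegrable
      (fun s => φ (x₀ + t * deriv f c - t * deriv f s) * deriv (deriv f) s) volume a b :=
    fun a b => (intervalIntegrable_of_abs_le (hφmeas.comp (by fun_prop)) (fun s => hφbdd _) a b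
      ).mul_continuousOn hqc.continuousOn
  have hsq : ∀ a b, IntervalIntegrable (fun s => s * deriv (deriv f) s) volume a b := fun a b =>
    (continuous_id.mul hqc).intervalIntegrable a b
  have hsplit : ∀ b, ∫ s in (0:ℝ)..b,
        deriv (deriv f) s * (φ (x₀ + t * deriv f c - t * deriv f s) - s)
      = (∫ s in (0:ℝ)..b, φ (x₀ + t * deriv f c - t * deriv f s) * deriv (deriv f) s)
        - ∫ s in (0:ℝ)..b, s * deriv (deriv f) s := fun b => by
    rw [← intervalIntegral.integral_sub (hφq 0 b) (hsq 0 b)]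
    congr 1 with s
    ring
  have hφsub := intervalIntegral.integral_interval_sub_left (hφq 0 u) (hφq 0 c)
  have hssub := intervalIntegral.integral_interval_sub_left (hsq 0 u) (hsq 0 c)
  have hcov := mul_integral_comp_mul_deriv hpq hconv φ (x₀ + t * deriv f c) c u ht
  have hΦ := phiInt_sub_phiInt hφmeas hφbdd (x₀ + t * (deriv f c - deriv f u)) x₀
  have hparts := integral_mul_deriv_eq hpq hqc c u
  rw [show x₀ + t * deriv f c - t * deriv f c = x₀ by ring,
    show x₀ + t * deriv f c - t * deriv f u = x₀ + t * (deriv f c - deriv f u) by ring] at hcov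
  rw [eFun, eFun, hsplit, hsplit]
  linear_combination t * hφsub - t * hssub + hcov - hΦ - t * hparts


lemma isDivide_of_le_phiInt (hf : ContDiff ℝ 2 f) (hconv : ∀ u, 0 ≤ deriv (deriv f) u)
    (hp : StrictMono (deriv f)) (hφmeas : Measurable φ) (hφbdd : ∀ x, |φ x| ≤ M) {x₀ c : ℝ}
    (hΦ : ∀ y, phiInt φ x₀ + c * (y - x₀) ≤ phiInt φ y) : IsDivide f φ x₀ c := by
  intro t ht
  refine maxSet_eq_singleton_iff.2 fun v hv => ?_
  have hdiff := eFun_sub_eFun hf hconv hφmeas hφbdd x₀ c v ht.le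
  have hexcess := mul_pos ht (integral_sub_pos_of_strictMono (hf.continuous_deriv (by norm_num)) hp hv)
  linarith [hΦ (x₀ + t * (deriv f c - deriv f v))]

lemma le_phiInt_of_isDivide (hf : ContDiff ℝ 2 f) (hconv : ∀ u, 0 ≤ deriv (deriv f) u)
    (hp : StrictMono (deriv f)) (hφmeas : Measurable φ) (hφbdd : ∀ x, |φ x| ≤ M) {x₀ c : ℝ}
    (hdiv : IsDivide f φ x₀ c) (y : ℝ) : phiInt φ x₀ + c * (y - x₀) ≤ phiInt φ y := by
  have hsmall : ∀ δ > 0, phiInt φ x₀ + c * (y - x₀) - phiInt φ y ≤ δ * |y - x₀| := by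
    intro δ hδ
    obtain ⟨t, ht, u, hu, hy⟩ :=
      exists_mul_sub_eq_of_strictMono (hf.continuous_deriv (by norm_num)) hp c (y - x₀) hδ
    have hmax : eFun f φ u (x₀ + t * deriv f c) t ≤ eFun f φ c (x₀ + t * deriv f c) t := by
      have hc : c ∈ maxSet f φ (x₀ + t * deriv f c) t := (hdiv t ht) ▸ rfl
      exact hc u
    have hdiff := eFun_sub_eFun hf hconv hφmeas hφbdd x₀ c u ht.le
    rw [hy, add_sub_cancel_left, add_sub_cancel] at hdiff
    have hdist : t * |deriv f u - deriv f c| = |y - x₀| := by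
      rw [← hy, abs_sub_comm, abs_mul, abs_of_pos ht]
    calc phiInt φ x₀ + c * (y - x₀) - phiInt φ y
        ≤ t * ∫ s in c..u, (deriv f u - deriv f s) := by linarith
      _ ≤ t * (|u - c| * |deriv f u - deriv f c|) :=
        mul_le_mul_of_nonneg_left (integral_sub_le_of_monotone hp.monotone c u) ht.le
      _ = |u - c| * |y - x₀| := by rw [← hdist]; ring
      _ ≤ δ * |y - x₀| := mul_le_mul_of_nonneg_right hu (abs_nonneg _)
  have hlim : Tendsto (fun δ : ℝ => δ * |y - x₀|) (𝓝[>] 0) (𝓝 0) := by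
    simpa only [zero_mul] using
      ((continuous_mul_const |y - x₀|).tendsto 0).mono_left nhdsWithin_le_nhds
  have := ge_of_tendsto hlim (eventually_mem_nhdsWithin.mono fun δ hδ => hsmall δ hδ)
  linarith

end Divide

/-- a ray is a divide iff `Φ` lies above the corresponding affine
function. -/
theorem stmt12_divide_characterization
    (f φ : ℝ → ℝ) (M : ℝ)
    (hf : ContDiff ℝ 2 f)
    (hconv : ∀ u : ℝ, 0 ≤ deriv (deriv f) u)
    (hdeg : volume {u : ℝ | deriv (deriv f) u = 0} = 0)
    (hφmeas : Measurable φ)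
    (hφbdd : ∀ x : ℝ, |φ x| ≤ M) :
    ∀ x₀ c : ℝ,
      (∀ t : ℝ, 0 < t → maxSet f φ (x₀ + t * deriv f c) t = {c}) ↔
      (∀ y : ℝ, phiInt φ x₀ + c * (y - x₀) ≤ phiInt φ y) := by
  have hp : StrictMono (deriv f) :=
    strictMono_of_deriv_nonneg_of_null hf.differentiable_deriv_two hconv hdeg
  exact fun x₀ c => ⟨le_phiInt_of_isDivide hf hconv hp hφmeas hφbdd,
    isDivide_of_le_phiInt hf hconv hp hφmeas hφbdd⟩
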